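/- arXiv:2303.11365 — 2 statements merged into one kernel-verified Lean document; each statement's English description precedes it below -/
import Mathlib

section
/- Suppose 0 < γ < 1. Then in any equilibrium (S_t), the normalized housing expenditure satisfies liminf_{t→∞} G^{−t}·S_t < e1; that is, the young's saving rate does not converge to zero: it cannot happen that S_t/(e1·G^t) → 1. -/
/-!
Since `a_t := S_t / G^t < e1`, a liminf of at least `e1` would force `a_t → e1`; we rule this out.
On one hand, the Euler equation together with `z · c_z ≤ c` (concavity in `z` and `c > 0`) and the
linear growth of `c` gives `S_t · c_y(y_t, z_t) = O(G^t)`, because `γ < 1` makes `m · c^γ = O(G^t)`;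
hence `a_t · c_y(y_t, z_t)` is bounded. On the other hand `y_t / z_t ≤ (e1 - a_t) / (e2 G) → 0`, and
since `c_y` is homogeneous of degree `0`, the Inada condition forces `c_y(y_t, z_t) → ∞`.
-/

open Real Filter Set Topology

/-- Assumption C: `c` is a positive, homogeneous of degree 1, twice continuously
differentiable function on `(0,∞)²` with partial derivatives `cy, cz > 0`, second partial
derivatives `cyy, czz < 0`, and Inada conditions. -/
structure AssumptionC (c cy cz cyy cyz czz : ℝ → ℝ → ℝ) : Prop where
  c_pos : ∀ ⦃y z : ℝ⦄, 0 < y → 0 < z → 0 < c y z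
  homog : ∀ ⦃l y z : ℝ⦄, 0 < l → 0 < y → 0 < z → c (l * y) (l * z) = l * c y z
  hderiv_y : ∀ ⦃y z : ℝ⦄, 0 < y → 0 < z → HasDerivAt (fun u => c u z) (cy y z) y
  hderiv_z : ∀ ⦃y z : ℝ⦄, 0 < y → 0 < z → HasDerivAt (fun v => c y v) (cz y z) z
  hderiv_yy : ∀ ⦃y z : ℝ⦄, 0 < y → 0 < z → HasDerivAt (fun u => cy u z) (cyy y z) y
  hderiv_yz : ∀ ⦃y z : ℝ⦄, 0 < y → 0 < z → HasDerivAt (fun v => cy y v) (cyz y z) z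
  hderiv_zy : ∀ ⦃y z : ℝ⦄, 0 < y → 0 < z → HasDerivAt (fun u => cz u z) (cyz y z) y
  hderiv_zz : ∀ ⦃y z : ℝ⦄, 0 < y → 0 < z → HasDerivAt (fun v => cz y v) (czz y z) z
  cy_pos : ∀ ⦃y z : ℝ⦄, 0 < y → 0 < z → 0 < cy y z
  cz_pos : ∀ ⦃y z : ℝ⦄, 0 < y → 0 < z → 0 < cz y z
  cyy_neg : ∀ ⦃y z : ℝ⦄, 0 < y → 0 < z → cyy y z < 0
  czz_neg : ∀ ⦃y z : ℝ⦄, 0 < y → 0 < z → czz y z < 0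
  cont2 : ContinuousOn (fun p : ℝ × ℝ => (cyy p.1 p.2, cyz p.1 p.2, czz p.1 p.2))
    {p : ℝ × ℝ | 0 < p.1 ∧ 0 < p.2}
  inada_y : ∀ ⦃z : ℝ⦄, 0 < z → Tendsto (fun y => cy y z) (𝓝[>] (0:ℝ)) atTop
  inada_z : ∀ ⦃y : ℝ⦄, 0 < y → Tendsto (fun z => cz y z) (𝓝[>] (0:ℝ)) atTop

/-- An equilibrium: `0 < S t < e1·G^t` and the difference equation
`S_{t+1}·c_z = S_t·c_y − m·c^γ` at `(y_t, z_t) = (e1·G^t − S_t, e2·G^{t+1} + S_{t+1})`. -/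
def IsEquilibrium (c cy cz : ℝ → ℝ → ℝ) (e1 e2 G γ m : ℝ) (S : ℕ → ℝ) : Prop :=
  ∀ t : ℕ, 0 < S t ∧ S t < e1 * G ^ t ∧
    S (t + 1) * cz (e1 * G ^ t - S t) (e2 * G ^ (t + 1) + S (t + 1)) =
      S t * cy (e1 * G ^ t - S t) (e2 * G ^ (t + 1) + S (t + 1)) -
        m * c (e1 * G ^ t - S t) (e2 * G ^ (t + 1) + S (t + 1)) ^ γ

/-- The rent `r_t = m·c(y_t,z_t)^γ / c_y(y_t,z_t)`. -/
noncomputable def rent (c cy : ℝ → ℝ → ℝ) (e1 e2 G γ m : ℝ) (S : ℕ → ℝ) (t : ℕ) : ℝ :=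
  m * c (e1 * G ^ t - S t) (e2 * G ^ (t + 1) + S (t + 1)) ^ γ /
    cy (e1 * G ^ t - S t) (e2 * G ^ (t + 1) + S (t + 1))

/-- The housing price `P_t = S_t − r_t`. -/
noncomputable def price (c cy : ℝ → ℝ → ℝ) (e1 e2 G γ m : ℝ) (S : ℕ → ℝ) (t : ℕ) : ℝ :=
  S t - rent c cy e1 e2 G γ m S t

/-- The gross interest rate `R_t = S_{t+1}/P_t`. -/
noncomputable def irate (c cy : ℝ → ℝ → ℝ) (e1 e2 G γ m : ℝ) (S : ℕ → ℝ) (t : ℕ) : ℝ :=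
  S (t + 1) / price c cy e1 e2 G γ m S t

lemma strictMonoOn_Ioi_of_hasDerivAt_pos {f f' : ℝ → ℝ}
    (hf : ∀ x, 0 < x → HasDerivAt f (f' x) x) (hf' : ∀ x, 0 < x → 0 < f' x) :
    StrictMonoOn f (Ioi 0) :=
  strictMonoOn_of_hasDerivWithinAt_pos (convex_Ioi 0)
    (fun x hx => (hf x hx).continuousAt.continuousWithinAt)
    (fun x hx => (hf x (by simpa using hx)).hasDerivWithinAt)
    (fun x hx => hf' x (by simpa using hx))

lemma strictAntiOn_Ioi_of_hasDerivAt_neg {f f' : ℝ → ℝ}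
    (hf : ∀ x, 0 < x → HasDerivAt f (f' x) x) (hf' : ∀ x, 0 < x → f' x < 0) :
    StrictAntiOn f (Ioi 0) :=
  strictAntiOn_of_hasDerivWithinAt_neg (convex_Ioi 0)
    (fun x hx => (hf x hx).continuousAt.continuousWithinAt)
    (fun x hx => (hf x (by simpa using hx)).hasDerivWithinAt)
    (fun x hx => hf' x (by simpa using hx))

/-- Letting `x → 0⁺` in the tangent-line bound `f' z · (z - x) ≤ f z - f x < f z`. -/
lemma mul_le_of_hasDerivAt_of_antitoneOn {f f' : ℝ → ℝ} (hpos : ∀ x, 0 < x → 0 < f x)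
    (hf : ∀ x, 0 < x → HasDerivAt f (f' x) x) (hf' : AntitoneOn f' (Ioi 0)) {z : ℝ}
    (hz : 0 < z) : z * f' z ≤ f z := by
  have hchord : ∀ x ∈ Ioo 0 z, f' z * (z - x) ≤ f z := by
    rintro x ⟨hx, hxz⟩
    have hxw : ∀ w ∈ Icc x z, 0 < w := fun w hw => hx.trans_le hw.1
    have hmvt := (convex_Icc x z).mul_sub_le_image_sub_of_le_deriv
      (fun w hw => (hf w (hxw w hw)).continuousAt.continuousWithinAt)
      (fun w hw => (hf w (hxw w (interior_subset hw))).differentiableAt.differentiableWithinAt)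
      (fun w hw => by
        rw [interior_Icc] at hw
        rw [(hf w (hx.trans hw.1)).deriv]
        exact hf' (hx.trans hw.1) hz hw.2.le)
      x (left_mem_Icc.2 hxz.le) z (right_mem_Icc.2 hxz.le) hxz.le
    linarith [hpos x hx]
  have hlim : Tendsto (fun x => f' z * (z - x)) (𝓝[>] 0) (𝓝 (f' z * (z - 0))) :=
    (tendsto_const_nhds.mul (tendsto_const_nhds.sub tendsto_id)).mono_left nhdsWithin_le_nhds
  rw [sub_zero] at hlim
  rw [mul_comm]
  exact le_of_tendsto hlim (mem_of_superset (Ioo_mem_nhdsGT hz) hchord)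

lemma rpow_le_one_add {x γ : ℝ} (hx : 0 ≤ x) (hγ0 : 0 ≤ γ) (hγ1 : γ ≤ 1) : x ^ γ ≤ 1 + x := by
  rcases le_total x 1 with h | h
  · linarith [Real.rpow_le_one hx h hγ0]
  · linarith [Real.rpow_le_self_of_one_le h hγ1]

lemma tendsto_of_le_liminf_of_forall_le {α : Type*} {l : Filter α} [l.NeBot] {u : α → ℝ}
    {a b : ℝ} (hb : ∀ x, b ≤ u x) (ha : ∀ x, u x ≤ a) (h : a ≤ liminf u l) :
    Tendsto u l (𝓝 a) :=
  tendsto_of_le_liminf_of_limsup_le h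
    (limsup_le_of_le (isBoundedUnder_of ⟨b, hb⟩).isCoboundedUnder_flip (.of_forall ha))
    (isBoundedUnder_of ⟨a, ha⟩) (isBoundedUnder_of ⟨b, hb⟩)

namespace AssumptionC

variable {c cy cz cyy cyz czz : ℝ → ℝ → ℝ} {y z : ℝ}

lemma strictMonoOn_left (hC : AssumptionC c cy cz cyy cyz czz) (hz : 0 < z) :
    StrictMonoOn (fun y => c y z) (Ioi 0) :=
  strictMonoOn_Ioi_of_hasDerivAt_pos (fun _ hy => hC.hderiv_y hy hz) (fun _ hy => hC.cy_pos hy hz)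

lemma strictMonoOn_right (hC : AssumptionC c cy cz cyy cyz czz) (hy : 0 < y) :
    StrictMonoOn (fun z => c y z) (Ioi 0) :=
  strictMonoOn_Ioi_of_hasDerivAt_pos (fun _ hz => hC.hderiv_z hy hz) (fun _ hz => hC.cz_pos hy hz)

lemma mul_cz_le (hC : AssumptionC c cy cz cyy cyz czz) (hy : 0 < y) (hz : 0 < z) :
    z * cz y z ≤ c y z :=
  mul_le_of_hasDerivAt_of_antitoneOn (fun _ hv => hC.c_pos hy hv) (fun _ hv => hC.hderiv_z hy hv)
    (strictAntiOn_Ioi_of_hasDerivAt_neg (fun _ hv => hC.hderiv_zz hy hv)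
      (fun _ hv => hC.czz_neg hy hv)).antitoneOn hz

lemma le_add_mul (hC : AssumptionC c cy cz cyy cyz czz) (hy : 0 < y) (hz : 0 < z) :
    c y z ≤ (y + z) * c 1 1 := by
  have hyz : 0 < y + z := add_pos hy hz
  calc c y z ≤ c (y + z) z :=
        (hC.strictMonoOn_left hz).monotoneOn hy hyz (le_add_of_nonneg_right hz.le)
    _ ≤ c (y + z) (y + z) :=
        (hC.strictMonoOn_right hyz).monotoneOn hz hyz (le_add_of_nonneg_left hy.le)
    _ = (y + z) * c 1 1 := by simpa using hC.homog hyz one_pos one_pos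

lemma cy_mul_mul (hC : AssumptionC c cy cz cyy cyz czz) {l : ℝ} (hl : 0 < l) (hy : 0 < y)
    (hz : 0 < z) : cy (l * y) (l * z) = cy y z := by
  have hscaled : HasDerivAt (fun u => c (l * u) (l * z)) (cy (l * y) (l * z) * l) y :=
    (hC.hderiv_y (mul_pos hl hy) (mul_pos hl hz)).comp y
      ((hasDerivAt_id y).const_mul l |>.congr_deriv (mul_one l))
  have hhomog : HasDerivAt (fun u => c (l * u) (l * z)) (l * cy y z) y :=
    ((hC.hderiv_y hy hz).const_mul l).congr_of_eventuallyEq <| by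
      filter_upwards [eventually_gt_nhds hy] with u hu using hC.homog hl hu hz
  exact mul_left_cancel₀ hl.ne' (by linarith [hscaled.unique hhomog])

lemma cy_eq_cy_div (hC : AssumptionC c cy cz cyy cyz czz) (hy : 0 < y) (hz : 0 < z) :
    cy y z = cy (y / z) 1 := by
  simpa [mul_div_cancel₀ _ hz.ne'] using hC.cy_mul_mul hz (div_pos hy hz) one_pos

lemma tendsto_cy_atTop (hC : AssumptionC c cy cz cyy cyz czz) {α : Type*} {l : Filter α}
    {y z : α → ℝ} (hy : ∀ a, 0 < y a) (hz : ∀ a, 0 < z a)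
    (h : Tendsto (fun a => y a / z a) l (𝓝 0)) : Tendsto (fun a => cy (y a) (z a)) l atTop := by
  simp only [fun a => hC.cy_eq_cy_div (hy a) (hz a)]
  exact (hC.inada_y one_pos).comp
    (tendsto_nhdsWithin_iff.2 ⟨h, .of_forall fun a => div_pos (hy a) (hz a)⟩)

lemma mul_cy_le (hC : AssumptionC c cy cz cyy cyz czz) (hy : 0 < y) (hz : 0 < z)
    {s s' m γ : ℝ} (hs'z : s' ≤ z) (hm : 0 ≤ m) (hγ0 : 0 ≤ γ) (hγ1 : γ ≤ 1)
    (heuler : s' * cz y z = s * cy y z - m * c y z ^ γ) :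
    s * cy y z ≤ (1 + m) * c y z + m := by
  have hold : s' * cz y z ≤ c y z :=
    (mul_le_mul_of_nonneg_right hs'z (hC.cz_pos hy hz).le).trans (hC.mul_cz_le hy hz)
  have hrent : m * c y z ^ γ ≤ m * (1 + c y z) :=
    mul_le_mul_of_nonneg_left (rpow_le_one_add (hC.c_pos hy hz).le hγ0 hγ1) hm
  linarith

end AssumptionC

-- The consumptions `y_t` and `z_t` of the young and the old in the equilibrium condition.
def consYoung (e1 G : ℝ) (S : ℕ → ℝ) (t : ℕ) : ℝ := e1 * G ^ t - S t

def consOld (e2 G : ℝ) (S : ℕ → ℝ) (t : ℕ) : ℝ := e2 * G ^ (t + 1) + S (t + 1)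

namespace IsEquilibrium

variable {c cy cz : ℝ → ℝ → ℝ} {e1 e2 G γ m : ℝ} {S : ℕ → ℝ}

lemma euler (hS : IsEquilibrium c cy cz e1 e2 G γ m S) (t : ℕ) :
    S (t + 1) * cz (consYoung e1 G S t) (consOld e2 G S t) =
      S t * cy (consYoung e1 G S t) (consOld e2 G S t) -
        m * c (consYoung e1 G S t) (consOld e2 G S t) ^ γ :=
  (hS t).2.2

lemma consYoung_pos (hS : IsEquilibrium c cy cz e1 e2 G γ m S) (t : ℕ) :
    0 < consYoung e1 G S t :=
  sub_pos.2 (hS t).2.1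

lemma consOld_pos (hS : IsEquilibrium c cy cz e1 e2 G γ m S) (he2 : 0 < e2) (hG : 0 < G)
    (t : ℕ) : 0 < consOld e2 G S t :=
  add_pos (by positivity) (hS (t + 1)).1

lemma consYoung_add_consOld_le (hS : IsEquilibrium c cy cz e1 e2 G γ m S) (t : ℕ) :
    consYoung e1 G S t + consOld e2 G S t ≤ (e1 + (e1 + e2) * G) * G ^ t := by
  have hnext : S (t + 1) < e1 * (G ^ t * G) := pow_succ G t ▸ (hS (t + 1)).2.1
  unfold consYoung consOld
  rw [pow_succ]
  nlinarith [(hS t).1]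

lemma consYoung_div_consOld_le (hS : IsEquilibrium c cy cz e1 e2 G γ m S) (he2 : 0 < e2)
    (hG : 0 < G) (t : ℕ) :
    consYoung e1 G S t / consOld e2 G S t ≤ (e1 - S t / G ^ t) / (e2 * G) := by
  have hGt : 0 < G ^ t := pow_pos hG t
  calc consYoung e1 G S t / consOld e2 G S t ≤ consYoung e1 G S t / (e2 * G ^ (t + 1)) :=
        div_le_div_of_nonneg_left (hS.consYoung_pos t).le (by positivity)
          (le_add_of_nonneg_right (hS (t + 1)).1.le)
    _ = (e1 - S t / G ^ t) / (e2 * G) := by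
        unfold consYoung
        field_simp
        ring

lemma div_pow_mul_cy_le (hC : AssumptionC c cy cz cyy cyz czz)
    (hS : IsEquilibrium c cy cz e1 e2 G γ m S) (he2 : 0 < e2) (hG : 1 ≤ G) (hγ0 : 0 ≤ γ)
    (hγ1 : γ ≤ 1) (hm : 0 ≤ m) (t : ℕ) :
    S t / G ^ t * cy (consYoung e1 G S t) (consOld e2 G S t) ≤
      (1 + m) * ((e1 + (e1 + e2) * G) * c 1 1) + m := by
  have hG0 : 0 < G := one_pos.trans_le hG
  have hGt : 0 < G ^ t := pow_pos hG0 t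
  have hy := hS.consYoung_pos t
  have hz := hS.consOld_pos he2 hG0 t
  have hbound := hC.mul_cy_le hy hz
    (le_add_of_nonneg_left (by positivity)) hm hγ0 hγ1 (hS.euler t)
  have hgrowth : c (consYoung e1 G S t) (consOld e2 G S t) ≤
      (e1 + (e1 + e2) * G) * c 1 1 * G ^ t :=
    (hC.le_add_mul hy hz).trans <| by
      rw [mul_right_comm]
      exact mul_le_mul_of_nonneg_right (hS.consYoung_add_consOld_le t)
        (hC.c_pos one_pos one_pos).le
  rw [div_mul_eq_mul_div, div_le_iff₀ hGt]
  nlinarith [one_le_pow₀ (n := t) hG]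

theorem not_tendsto_div_pow (hC : AssumptionC c cy cz cyy cyz czz)
    (hS : IsEquilibrium c cy cz e1 e2 G γ m S) (he1 : 0 < e1) (he2 : 0 < e2) (hG : 1 < G)
    (hγ0 : 0 < γ) (hγ1 : γ < 1) (hm : 0 < m) :
    ¬ Tendsto (fun t => S t / G ^ t) atTop (𝓝 e1) := by
  intro h
  have hG0 : 0 < G := one_pos.trans hG
  have hratio : Tendsto (fun t => consYoung e1 G S t / consOld e2 G S t) atTop (𝓝 0) :=
    squeeze_zero (fun t => (div_pos (hS.consYoung_pos t) (hS.consOld_pos he2 hG0 t)).le)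
      (hS.consYoung_div_consOld_le he2 hG0)
      (by simpa using ((tendsto_const_nhds (x := e1)).sub h).div_const (e2 * G))
  have hcy := hC.tendsto_cy_atTop hS.consYoung_pos (hS.consOld_pos he2 hG0) hratio
  obtain ⟨t, ht⟩ := ((h.pos_mul_atTop he1 hcy).eventually_gt_atTop
    ((1 + m) * ((e1 + (e1 + e2) * G) * c 1 1) + m)).exists
  exact ht.not_ge (hS.div_pow_mul_cy_le hC he2 hG.le hγ0.le hγ1.le hm.le t)

end IsEquilibrium

/-- If `0 < γ < 1`, then in any equilibrium `liminf G^{−t}·S_t < e1`; in particular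
the normalized housing expenditure `S_t/(e1·G^t)` does not converge to `1`. -/
theorem stmt_8 (c cy cz cyy cyz czz : ℝ → ℝ → ℝ)
    (hC : AssumptionC c cy cz cyy cyz czz) (e1 e2 G γ m : ℝ)
    (he1 : 0 < e1) (he2 : 0 < e2) (hG : 1 < G) (hγ0 : 0 < γ) (hγ1 : γ < 1) (hm : 0 < m)
    (S : ℕ → ℝ) (hS : IsEquilibrium c cy cz e1 e2 G γ m S) :
    liminf (fun t : ℕ => G ^ (-(t : ℝ)) * S t) atTop < e1 ∧
    ¬ Tendsto (fun t : ℕ => S t / (e1 * G ^ t)) atTop (𝓝 1) := by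
  have hG0 : 0 < G := one_pos.trans hG
  have hnot := hS.not_tendsto_div_pow hC he1 he2 hG hγ0 hγ1 hm
  have hnorm : (fun t : ℕ => G ^ (-(t : ℝ)) * S t) = fun t => S t / G ^ t := by
    funext t
    rw [Real.rpow_neg hG0.le, Real.rpow_natCast, inv_mul_eq_div]
  refine ⟨?_, fun h => hnot ?_⟩
  · rw [hnorm]
    by_contra! hle
    exact hnot (tendsto_of_le_liminf_of_forall_le
      (fun t => div_nonneg (hS t).1.le (pow_pos hG0 t).le)
      (fun t => (div_lt_iff₀ (pow_pos hG0 t)).2 (hS t).2.1 |>.le) hle)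
  · have he1G : ∀ t : ℕ, e1 * (S t / (e1 * G ^ t)) = S t / G ^ t := fun t => by
      field_simp
    simpa [he1G] using h.const_mul e1
end

section
/- Suppose G > 1 and 0 < γ < 1. Then: (a) there exists a unique w_b^* > 0 satisfying c_y(1, G·w_b^*)/c_z(1, G·w_b^*) = G; (b) w_f^* < w_b^*, where w_f^* > 0 is the unique solution of c_y(1,G·w_f^*)/c_z(1,G·w_f^*) = G^γ; (c) for any w > 0, a number s ∈ (0,1) satisfies the bubbly steady state condition G·c_z(1−s, G·(w+s)) = c_y(1−s, G·(w+s)) if and only if s = (w_b^* − w)/(w_b^* + 1), and such an s ∈ (0,1) exists if and only if w < w_b^*. -/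
/-!
Homogeneity of degree one makes `c_y` and `c_z` homogeneous of degree zero, so every condition
involving them depends only on the ratio `z / y`, through `F(z) = c_y(1, z) / c_z(1, z)`. Euler's
identity for `c_y` gives `c_yz > 0` from `c_yy < 0`, and together with `c_zz < 0` this makes `F`
strictly increasing; the Inada conditions make `F` run from `0` to `∞`. Hence `F(G w) = G` has
exactly one positive root `w_b^*`, `G^γ < G` forces `w_f^* < w_b^*`, and the bubbly condition at
`s` reads `F(G (w + s) / (1 - s)) = G`, i.e. `(w + s) / (1 - s) = w_b^*`.
-/

open Real Filter Set Topology

def HomogeneousOnPos (f : ℝ → ℝ → ℝ) (k : ℕ) : Prop :=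
  ∀ ⦃l y z : ℝ⦄, 0 < l → 0 < y → 0 < z → f (l * y) (l * z) = l ^ k * f y z

namespace HomogeneousOnPos

variable {f g f' : ℝ → ℝ → ℝ} {k : ℕ}

theorem swap (hf : HomogeneousOnPos f k) : HomogeneousOnPos (fun y z => f z y) k :=
  fun _ _ _ hl hy hz => hf hl hz hy

theorem of_hasDerivAt_fst (hf : HomogeneousOnPos f (k + 1))
    (hf' : ∀ ⦃y z : ℝ⦄, 0 < y → 0 < z → HasDerivAt (fun u => f u z) (f' y z) y) :
    HomogeneousOnPos f' k := by
  intro l y z hl hy hz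
  have h_scaled : HasDerivAt (fun u => f (l * u) (l * z)) (f' (l * y) (l * z) * l) y :=
    (hf' (by positivity) (by positivity)).comp y ((hasDerivAt_id y).const_mul l |>.congr_deriv
      (mul_one l))
  have h_eq : (fun u => f (l * u) (l * z)) =ᶠ[𝓝 y] fun u => l ^ (k + 1) * f u z := by
    filter_upwards [Ioi_mem_nhds hy] with u hu using hf hl hu hz
  have := h_scaled.unique (((hf' hy hz).const_mul (l ^ (k + 1))).congr_of_eventuallyEq h_eq)
  rw [pow_succ] at this
  exact mul_right_cancel₀ hl.ne' (by linarith)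

/-- Euler's identity, obtained from the single-variable curve `t ↦ g (t * y) z = t ^ k * g y (z / t)`
since only partial derivatives are available. -/
theorem euler (hg : HomogeneousOnPos g k) {a b y z : ℝ} (hy : 0 < y) (hz : 0 < z)
    (ha : HasDerivAt (fun u => g u z) a y) (hb : HasDerivAt (fun v => g y v) b z) :
    a * y + b * z = k * g y z := by
  have h_left : HasDerivAt (fun t => g (t * y) z) (a * y) 1 :=
    ha.comp_of_eq 1 (((hasDerivAt_id 1).mul_const y).congr_deriv (one_mul y)) (one_mul y).symm
  have h_right : HasDerivAt (fun t => t ^ k * g y (z / t)) (k * g y z + b * -z) 1 := by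
    have h_div : HasDerivAt (fun t : ℝ => z / t) (-z) 1 := by
      simpa [div_eq_mul_inv] using (hasDerivAt_inv one_ne_zero).const_mul z
    have := (hasDerivAt_pow k (1 : ℝ)).mul (hb.comp_of_eq 1 h_div (div_one z).symm)
    simp only [one_pow, mul_one, Function.comp_apply, div_one, mul_neg, one_mul] at this
    exact this.congr_deriv (by ring)
  have h_eq : (fun t => g (t * y) z) =ᶠ[𝓝 1] fun t => t ^ k * g y (z / t) := by
    filter_upwards [Ioi_mem_nhds one_pos] with t ht
    have := hg ht hy (div_pos hz ht)
    rwa [mul_div_cancel₀ z ht.ne'] at this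
  linarith [h_left.unique (h_right.congr_of_eventuallyEq h_eq)]

end HomogeneousOnPos

noncomputable def marginalRate (cy cz : ℝ → ℝ → ℝ) (z : ℝ) : ℝ := cy 1 z / cz 1 z

namespace AssumptionC

variable {c cy cz cyy cyz czz : ℝ → ℝ → ℝ} (hC : AssumptionC c cy cz cyy cyz czz)
include hC

theorem homogeneousOnPos : HomogeneousOnPos c 1 := by
  simpa [HomogeneousOnPos] using hC.homog

theorem cy_homogeneousOnPos : HomogeneousOnPos cy 0 :=
  hC.homogeneousOnPos.of_hasDerivAt_fst hC.hderiv_y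

theorem cz_homogeneousOnPos : HomogeneousOnPos cz 0 :=
  (hC.homogeneousOnPos.swap.of_hasDerivAt_fst fun _ _ hy hz => hC.hderiv_z hz hy).swap

theorem cy_eq_cy_one {y z : ℝ} (hy : 0 < y) (hz : 0 < z) : cy y z = cy 1 (z / y) := by
  simpa [mul_div_cancel₀ z hy.ne'] using hC.cy_homogeneousOnPos hy one_pos (div_pos hz hy)

theorem cz_eq_cz_one {y z : ℝ} (hy : 0 < y) (hz : 0 < z) : cz y z = cz 1 (z / y) := by
  simpa [mul_div_cancel₀ z hy.ne'] using hC.cz_homogeneousOnPos hy one_pos (div_pos hz hy)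

theorem cy_one_eq_cy_inv {z : ℝ} (hz : 0 < z) : cy 1 z = cy z⁻¹ 1 := by
  rw [hC.cy_eq_cy_one (inv_pos.2 hz) one_pos, one_div, inv_inv]

theorem cyz_pos {y z : ℝ} (hy : 0 < y) (hz : 0 < z) : 0 < cyz y z := by
  have h_euler := hC.cy_homogeneousOnPos.euler hy hz (hC.hderiv_yy hy hz) (hC.hderiv_yz hy hz)
  rw [Nat.cast_zero, zero_mul] at h_euler
  nlinarith [hC.cyy_neg hy hz]

theorem strictAntiOn_cy {z : ℝ} (hz : 0 < z) : StrictAntiOn (fun u => cy u z) (Ioi 0) :=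
  strictAntiOn_of_deriv_neg (convex_Ioi 0)
    (fun _ hy => (hC.hderiv_yy hy hz).continuousAt.continuousWithinAt) fun y hy => by
      rw [interior_Ioi] at hy
      rw [(hC.hderiv_yy hy hz).deriv]
      exact hC.cyy_neg hy hz

theorem strictAntiOn_cz {y : ℝ} (hy : 0 < y) : StrictAntiOn (cz y) (Ioi 0) :=
  strictAntiOn_of_deriv_neg (convex_Ioi 0)
    (fun _ hz => (hC.hderiv_zz hy hz).continuousAt.continuousWithinAt) fun z hz => by
      rw [interior_Ioi] at hz
      rw [(hC.hderiv_zz hy hz).deriv]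
      exact hC.czz_neg hy hz

theorem hasDerivAt_marginalRate {z : ℝ} (hz : 0 < z) :
    HasDerivAt (marginalRate cy cz)
      ((cyz 1 z * cz 1 z - cy 1 z * czz 1 z) / cz 1 z ^ 2) z :=
  (hC.hderiv_yz one_pos hz).div (hC.hderiv_zz one_pos hz) (hC.cz_pos one_pos hz).ne'

theorem continuousOn_marginalRate : ContinuousOn (marginalRate cy cz) (Ioi 0) :=
  fun _ hz => (hC.hasDerivAt_marginalRate hz).continuousAt.continuousWithinAt

theorem marginalRate_strictMonoOn : StrictMonoOn (marginalRate cy cz) (Ioi 0) :=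
  strictMonoOn_of_deriv_pos (convex_Ioi 0) hC.continuousOn_marginalRate fun z hz => by
    rw [interior_Ioi] at hz
    rw [(hC.hasDerivAt_marginalRate hz).deriv]
    have h_den := hC.cz_pos one_pos hz
    have h_num : 0 < cyz 1 z * cz 1 z - cy 1 z * czz 1 z := by
      nlinarith [hC.cyz_pos one_pos hz, hC.cy_pos one_pos hz, hC.czz_neg one_pos hz]
    positivity

/-- On `(0, 1]` the numerator is at most `c_y(1, 1)` (as `c_y(1, z) = c_y(1/z, 1)` and `c_yy < 0`),
while the denominator blows up by the Inada condition. -/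
theorem tendsto_marginalRate_nhdsGT_zero :
    Tendsto (marginalRate cy cz) (𝓝[>] 0) (𝓝 0) := by
  have h_bound : Tendsto (fun z => cy 1 1 / cz 1 z) (𝓝[>] 0) (𝓝 0) :=
    tendsto_const_nhds.div_atTop (hC.inada_z one_pos)
  refine tendsto_of_tendsto_of_tendsto_of_le_of_le' tendsto_const_nhds h_bound ?_ ?_
  · filter_upwards [self_mem_nhdsWithin] with z (hz : 0 < z)
    exact (div_pos (hC.cy_pos one_pos hz) (hC.cz_pos one_pos hz)).le
  · filter_upwards [Ioo_mem_nhdsGT one_pos] with z ⟨hz, hz1⟩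
    show cy 1 z / cz 1 z ≤ _
    have h_num : cy 1 z ≤ cy 1 1 := by
      rw [hC.cy_one_eq_cy_inv hz]
      exact (hC.strictAntiOn_cy one_pos (mem_Ioi.2 one_pos) (mem_Ioi.2 (inv_pos.2 hz))
        ((one_lt_inv₀ hz).2 hz1)).le
    exact div_le_div_of_nonneg_right h_num (hC.cz_pos one_pos hz).le

/-- For `z ≥ 1` the denominator is at most `c_z(1, 1)` (as `c_zz < 0`), while the numerator
`c_y(1, z) = c_y(1/z, 1)` blows up by the Inada condition. -/
theorem tendsto_marginalRate_atTop : Tendsto (marginalRate cy cz) atTop atTop := by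
  have h_num : Tendsto (fun z => cy 1 z) atTop atTop := by
    refine ((hC.inada_y one_pos).comp tendsto_inv_atTop_nhdsGT_zero).congr' ?_
    filter_upwards [eventually_gt_atTop 0] with z hz using (hC.cy_one_eq_cy_inv hz).symm
  refine tendsto_atTop_mono' _ ?_ (h_num.atTop_div_const (hC.cz_pos one_pos one_pos))
  filter_upwards [eventually_ge_atTop 1] with z hz
  have hz0 : 0 < z := one_pos.trans_le hz
  exact div_le_div_of_nonneg_left (hC.cy_pos one_pos hz0).le (hC.cz_pos one_pos hz0)
    (hC.strictAntiOn_cz one_pos |>.antitoneOn (mem_Ioi.2 one_pos) (mem_Ioi.2 hz0) hz)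

theorem exists_marginalRate_eq {T : ℝ} (hT : 0 < T) : ∃ z, 0 < z ∧ marginalRate cy cz z = T := by
  obtain ⟨z₁, hz₁T, hz₁⟩ :=
    ((hC.tendsto_marginalRate_nhdsGT_zero.eventually (gt_mem_nhds hT)).and
      self_mem_nhdsWithin).exists
  obtain ⟨z₂, hz₂T, hz₁₂⟩ :=
    ((hC.tendsto_marginalRate_atTop.eventually_gt_atTop T).and (eventually_ge_atTop z₁)).exists
  obtain ⟨z, hz, hzT⟩ := intermediate_value_Icc hz₁₂
    (hC.continuousOn_marginalRate.mono fun x hx => lt_of_lt_of_le hz₁ hx.1) ⟨hz₁T.le, hz₂T.le⟩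
  exact ⟨z, lt_of_lt_of_le hz₁ hz.1, hzT⟩

theorem existsUnique_marginalRate_mul_eq {a T : ℝ} (ha : 0 < a) (hT : 0 < T) :
    ∃! w, 0 < w ∧ marginalRate cy cz (a * w) = T := by
  obtain ⟨z, hz, hzT⟩ := hC.exists_marginalRate_eq hT
  refine ⟨z / a, ⟨div_pos hz ha, by rwa [mul_div_cancel₀ z ha.ne']⟩, fun w ⟨hw, hwT⟩ => ?_⟩
  have := hC.marginalRate_strictMonoOn.injOn (mem_Ioi.2 (mul_pos ha hw)) (mem_Ioi.2 hz)
    (hwT.trans hzT.symm)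
  rw [← this, mul_div_cancel_left₀ w ha.ne']

theorem mul_cz_eq_cy_iff {G y z : ℝ} (hy : 0 < y) (hz : 0 < z) :
    G * cz y z = cy y z ↔ marginalRate cy cz (z / y) = G := by
  rw [hC.cy_eq_cy_one hy hz, hC.cz_eq_cz_one hy hz, marginalRate,
    div_eq_iff (hC.cz_pos one_pos (div_pos hz hy)).ne']
  exact eq_comm

theorem bubblySteadyState_iff {G wb w s : ℝ} (hG : 0 < G) (hwb : 0 < wb)
    (hwb_eq : marginalRate cy cz (G * wb) = G) (hws : 0 < w + s) (hs : s < 1) :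
    G * cz (1 - s) (G * (w + s)) = cy (1 - s) (G * (w + s)) ↔ s = (wb - w) / (wb + 1) := by
  have h1s : 0 < 1 - s := sub_pos.2 hs
  have hGws : 0 < G * (w + s) := mul_pos hG hws
  rw [hC.mul_cz_eq_cy_iff h1s hGws]
  calc marginalRate cy cz (G * (w + s) / (1 - s)) = G
      ↔ marginalRate cy cz (G * (w + s) / (1 - s)) = marginalRate cy cz (G * wb) := by
        rw [hwb_eq]
    _ ↔ G * (w + s) / (1 - s) = G * wb :=
        hC.marginalRate_strictMonoOn.injOn.eq_iff (mem_Ioi.2 (div_pos hGws h1s))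
          (mem_Ioi.2 (mul_pos hG hwb))
    _ ↔ s = (wb - w) / (wb + 1) := by
        rw [mul_div_assoc, mul_right_inj' hG.ne', div_eq_iff h1s.ne', eq_div_iff (by linarith)]
        constructor <;> intro h <;> linarith

end AssumptionC

theorem stmt_11_general (c cy cz cyy cyz czz : ℝ → ℝ → ℝ)
    (hC : AssumptionC c cy cz cyy cyz czz) (G γ : ℝ)
    (hG : 1 < G) (hγ1 : γ < 1) :
    (∃! w : ℝ, 0 < w ∧ cy 1 (G * w) / cz 1 (G * w) = G) ∧
    (∀ wf wb : ℝ, 0 < wf → cy 1 (G * wf) / cz 1 (G * wf) = G ^ γ →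
      0 < wb → cy 1 (G * wb) / cz 1 (G * wb) = G →
      wf < wb ∧
      ∀ w : ℝ, 0 < w →
        (∀ s ∈ Ioo (0:ℝ) 1,
          (G * cz (1 - s) (G * (w + s)) = cy (1 - s) (G * (w + s)) ↔
            s = (wb - w) / (wb + 1))) ∧
        ((∃ s ∈ Ioo (0:ℝ) 1,
            G * cz (1 - s) (G * (w + s)) = cy (1 - s) (G * (w + s))) ↔ w < wb)) := by
  have hG0 : 0 < G := one_pos.trans hG
  refine ⟨hC.existsUnique_marginalRate_mul_eq hG0 hG0, fun wf wb hwf hwf_eq hwb hwb_eq => ?_⟩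
  have h_steady {w s : ℝ} (hw : 0 < w) (hs : s ∈ Ioo (0 : ℝ) 1) :=
    hC.bubblySteadyState_iff hG0 hwb hwb_eq (add_pos hw hs.1) hs.2
  have h_rate : marginalRate cy cz (G * wf) < marginalRate cy cz (G * wb) :=
    (hwf_eq.trans_lt (rpow_lt_self_of_one_lt hG hγ1)).trans_eq hwb_eq.symm
  refine ⟨lt_of_mul_lt_mul_left ((hC.marginalRate_strictMonoOn.lt_iff_lt
    (mem_Ioi.2 (by positivity)) (mem_Ioi.2 (by positivity))).1 h_rate) hG0.le,
    fun w hw => ⟨fun s hs => h_steady hw hs, ?_⟩⟩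
  have hwb1 : 0 < wb + 1 := by linarith
  constructor
  · rintro ⟨s, hs, h⟩
    have hs_pos := (h_steady hw hs).1 h ▸ hs.1
    exact sub_pos.1 ((div_pos_iff_of_pos_right hwb1).1 hs_pos)
  · intro hwwb
    have hs : (wb - w) / (wb + 1) ∈ Ioo (0 : ℝ) 1 :=
      ⟨div_pos (by linarith) hwb1, (div_lt_one hwb1).2 (by linarith)⟩
    exact ⟨_, hs, (h_steady hw hs).2 rfl⟩

/-- (a) There is a unique `w_b^* > 0` with `c_y(1,G·w_b^*)/c_z(1,G·w_b^*) = G`;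
(b) `w_f^* < w_b^*`; (c) `s ∈ (0,1)` satisfies the bubbly steady state condition
`G·c_z(1−s, G(w+s)) = c_y(1−s, G(w+s))` iff `s = (w_b^* − w)/(w_b^* + 1)`, and such
an `s` exists iff `w < w_b^*`. -/
theorem stmt_11 (c cy cz cyy cyz czz : ℝ → ℝ → ℝ)
    (hC : AssumptionC c cy cz cyy cyz czz) (G γ : ℝ)
    (hG : 1 < G) (hγ0 : 0 < γ) (hγ1 : γ < 1) :
    (∃! w : ℝ, 0 < w ∧ cy 1 (G * w) / cz 1 (G * w) = G) ∧
    (∀ wf wb : ℝ, 0 < wf → cy 1 (G * wf) / cz 1 (G * wf) = G ^ γ →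
      0 < wb → cy 1 (G * wb) / cz 1 (G * wb) = G →
      wf < wb ∧
      ∀ w : ℝ, 0 < w →
        (∀ s ∈ Ioo (0:ℝ) 1,
          (G * cz (1 - s) (G * (w + s)) = cy (1 - s) (G * (w + s)) ↔
            s = (wb - w) / (wb + 1))) ∧
        ((∃ s ∈ Ioo (0:ℝ) 1,
            G * cz (1 - s) (G * (w + s)) = cy (1 - s) (G * (w + s))) ↔ w < wb)) :=
  stmt_11_general c cy cz cyy cyz czz hC G γ hG hγ1
end
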